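/- Under the user adjacency relation with post-attribution contribution bound enforcement with bound r (each weighted (impression, conversion, w) triple is added to the attributed dataset only if the user's remaining contribution bound is at least w, in which case w is deducted), for any attribution rule, any two adjacent datasets (differing by adding all impressions and conversions of a single user) yield attributed datasets at ℓ1-distance at most r. -/

import Mathlib

/-! Framework for differentially private ad conversion measurement
(Delaney et al., "Differentially Private Ad Conversion Measurement"). -/

structure Impression where
  time : ℕ
  user : ℕ
  pub : ℕ
  adv : ℕ
  id : ℕ
deriving DecidableEq

structure Conversion where
  time : ℕ
  user : ℕ
  adv : ℕ
  id : ℕ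
deriving DecidableEq

structure Dataset where
  imps : List Impression
  convs : List Conversion

/-- An attribution rule maps a time-ordered list of impressions and a conversion
to a list of credits (one per impression). -/
abbrev AttrRule := List Impression → Conversion → List ℝ

/-- A valid attribution rule outputs one nonnegative weight per impression, summing to 1. -/
def ValidRule (a : AttrRule) : Prop :=
  ∀ is c, is ≠ [] →
    (a is c).length = is.length ∧ (a is c).sum = 1 ∧ ∀ w ∈ a is c, (0 : ℝ) ≤ w

/-- Impressions eligible for attribution of conversion `c`: those occurring earlier
with the same user and advertiser. -/
def eligible (D : Dataset) (c : Conversion) : List Impression :=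
  D.imps.filter fun i => decide (i.time < c.time ∧ i.user = c.user ∧ i.adv = c.adv)

/-- ℓ₁ distance between attributed datasets. -/
noncomputable def l1dist (w w' : (Impression × Conversion) →₀ ℝ) : ℝ :=
  (w - w').sum fun _ v => |v|

/-- Impressions and conversions are listed in time order. -/
def SortedDS (D : Dataset) : Prop :=
  D.imps.Pairwise (fun i j => i.time ≤ j.time) ∧
  D.convs.Pairwise (fun c c' => c.time ≤ c'.time)

/-- Inner loop of post-attribution contribution-bound enforcement: each weighted
(impression, conversion) pair is kept only if the remaining bound of its scope covers
the weight, in which case the weight is deducted. -/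
noncomputable def applyPairs {σ : Type} [DecidableEq σ] (s : Impression → σ) (c : Conversion) :
    List (Impression × ℝ) → (σ → ℝ) × ((Impression × Conversion) →₀ ℝ) →
      (σ → ℝ) × ((Impression × Conversion) →₀ ℝ)
  | [], st => st
  | (i, w) :: rest, st =>
      if w ≤ st.1 (s i) then
        applyPairs s c rest
          (Function.update st.1 (s i) (st.1 (s i) - w), st.2 + Finsupp.single (i, c) w)
      else
        applyPairs s c rest st

/-- Attribution with post-attribution contribution bound enforcement (Algorithm 1),
with contribution bounding scope map `s` and contribution bound `r`. -/
noncomputable def postAttr {σ : Type} [DecidableEq σ] (a : AttrRule) (s : Impression → σ)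
    (r : ℝ) (D : Dataset) : (Impression × Conversion) →₀ ℝ :=
  (D.convs.foldl
    (fun st c => applyPairs s c ((eligible D c).zip (a (eligible D c) c)) st)
    ((fun _ => r : σ → ℝ), (0 : (Impression × Conversion) →₀ ℝ))).2

/-- Attribution with pre-attribution contribution bound enforcement (Algorithm 2):
for each conversion, every scope with an eligible impression pays one unit of its bound
if available, otherwise its impressions are excluded from attribution. -/
noncomputable def preAttr {σ : Type} [DecidableEq σ] (a : AttrRule) (s : Impression → σ)
    (r : ℝ) (D : Dataset) : (Impression × Conversion) →₀ ℝ :=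
  (D.convs.foldl
    (fun (st : (σ → ℝ) × ((Impression × Conversion) →₀ ℝ)) c =>
      let el := eligible D c
      let surv := el.filter fun i => decide ((1 : ℝ) ≤ st.1 (s i))
      let scopes := (el.map s).dedup
      ((fun x => if x ∈ scopes ∧ (1 : ℝ) ≤ st.1 x then st.1 x - 1 else st.1 x : σ → ℝ),
        st.2 + ((surv.zip (a surv c)).map fun p => Finsupp.single (p.1, c) p.2).sum))
    ((fun _ => r : σ → ℝ), (0 : (Impression × Conversion) →₀ ℝ))).2

/-- Attribution without any contribution bound enforcement. -/
noncomputable def attrNoCap (a : AttrRule) (D : Dataset) :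
    (Impression × Conversion) →₀ ℝ :=
  (D.convs.map fun c =>
    (((eligible D c).zip (a (eligible D c) c)).map fun p => Finsupp.single (p.1, c) p.2).sum).sum

/-- Adjacency: `D'` results from `D` by adding a single impression (in time order). -/
def AddOneImpression (D D' : Dataset) : Prop :=
  ∃ (i0 : Impression) (l₁ l₂ : List Impression),
    D.imps = l₁ ++ l₂ ∧ D'.imps = l₁ ++ i0 :: l₂ ∧ D.convs = D'.convs

/-- Adjacency: `D` results from `D'` by removing all impressions whose scope (under `si`)
is `v` and all conversions whose scope (under `sc`) is `v`. -/
def RemovesScope {σ : Type} [DecidableEq σ] (si : Impression → σ)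
    (sc : Conversion → Option σ) (v : σ) (D D' : Dataset) : Prop :=
  D.imps = D'.imps.filter (fun i => decide (si i ≠ v)) ∧
  D.convs = D'.convs.filter (fun c => decide (sc c ≠ some v))

/-- First-touch attribution. -/
noncomputable def FTA : AttrRule := fun is _ =>
  match is with
  | [] => []
  | _ :: t => 1 :: t.map fun _ => 0

/-- Last-touch attribution. -/
noncomputable def LTA : AttrRule := fun is _ =>
  match is with
  | [] => []
  | _ :: _ => List.replicate (is.length - 1) 0 ++ [1]

/-- Uniform multi-touch attribution. -/
noncomputable def UNI : AttrRule := fun is _ => is.map fun _ => ((is.length : ℝ))⁻¹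

/-- U-shaped attribution. -/
noncomputable def USH : AttrRule := fun is _ =>
  match is with
  | [] => []
  | [_] => [1]
  | [_, _] => [0.5, 0.5]
  | _ :: _ :: _ :: _ =>
      (0.4 : ℝ) :: (List.replicate (is.length - 2) ((0.2 : ℝ) / ((is.length : ℝ) - 2)) ++ [0.4])

/-- Exponential time decay attribution with half-life `th`. -/
noncomputable def EXPR (th : ℝ) : AttrRule := fun is c =>
  let wt : Impression → ℝ := fun i => (2 : ℝ) ^ (-(((c.time : ℝ) - (i.time : ℝ)) / th))
  is.map fun i => wt i / (is.map wt).sum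

/-! Adding a user `u` only adds conversions of `u`, and these can only be attributed to
impressions of `u`: the run on the larger dataset is the run on the smaller one, except for
`u`'s remaining bound and an extra nonnegative attribution. Every weight kept for `u` is paid
from `u`'s bound, which starts at `r` and never becomes negative, so the extra attribution
has total mass, hence ℓ₁-norm, at most `r`. -/

def ScopeExtension {σ : Type} [DecidableEq σ] (u : σ) (r : ℝ)
    (st st' : (σ → ℝ) × ((Impression × Conversion) →₀ ℝ)) : Prop :=
  ∃ (t : ℝ) (Δ : (Impression × Conversion) →₀ ℝ),
    st' = (Function.update st.1 u t, st.2 + Δ) ∧ 0 ≤ t ∧ 0 ≤ Δ ∧ (Δ.sum fun _ v => v) + t ≤ r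

lemma l1dist_add_of_nonneg (φ Δ : (Impression × Conversion) →₀ ℝ) (hΔ : 0 ≤ Δ) :
    l1dist φ (φ + Δ) = Δ.sum fun _ v => v := by
  rw [l1dist, sub_add_cancel_left, Finsupp.sum_neg_index fun _ => abs_zero]
  exact Finsupp.sum_congr fun q _ => by rw [abs_neg, abs_of_nonneg (hΔ q)]

lemma List.foldl_filter_rel {α β γ : Type*} {R : β → γ → Prop} {f : β → α → β}
    {g : γ → α → γ} (p : α → Bool)
    (hp : ∀ x y a, p a → R x y → R (f x a) (g y a))
    (hnp : ∀ x y a, ¬ p a → R x y → R x (g y a)) :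
    ∀ (l : List α) (x : β) (y : γ), R x y → R ((l.filter p).foldl f x) (l.foldl g y)
  | [], _, _, h => h
  | a :: l, x, y, h => by
    by_cases ha : p a
    · simpa [List.filter_cons, ha] using List.foldl_filter_rel p hp hnp l _ _ (hp x y a ha h)
    · simpa [List.filter_cons, ha] using List.foldl_filter_rel p hp hnp l _ _ (hnp x y a ha h)

namespace ScopeExtension

variable {σ : Type} [DecidableEq σ] {u : σ} {r : ℝ}

lemma init (hr : 0 ≤ r) :
    ScopeExtension u r ((fun _ => r : σ → ℝ), 0) ((fun _ => r : σ → ℝ), 0) :=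
  ⟨r, 0, by simp, hr, le_rfl, by simp⟩

lemma l1dist_le {st st' : (σ → ℝ) × ((Impression × Conversion) →₀ ℝ)}
    (h : ScopeExtension u r st st') : l1dist st.2 st'.2 ≤ r := by
  obtain ⟨t, Δ, rfl, ht, hΔ, hsum⟩ := h
  rw [l1dist_add_of_nonneg _ _ hΔ]
  linarith

lemma applyPairs_of_forall_ne (s : Impression → σ) (c : Conversion) :
    ∀ (l : List (Impression × ℝ)) {st st'}, (∀ p ∈ l, s p.1 ≠ u) →
      ScopeExtension u r st st' →
      ScopeExtension u r (applyPairs s c l st) (applyPairs s c l st')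
  | [], _, _, _, h => h
  | (i, w) :: l, (b, φ), _, hl, h => by
    obtain ⟨t, Δ, rfl, ht, hΔ, hsum⟩ := h
    have hi : s i ≠ u := hl (i, w) List.mem_cons_self
    have hl' : ∀ p ∈ l, s p.1 ≠ u := fun p hp => hl p (List.mem_cons_of_mem _ hp)
    have hbound : Function.update b u t (s i) = b (s i) := Function.update_of_ne hi _ _
    by_cases hw : w ≤ b (s i)
    · simp only [applyPairs, hbound, hw, if_true]
      refine applyPairs_of_forall_ne s c l hl' ⟨t, Δ, ?_, ht, hΔ, hsum⟩
      rw [Function.update_comm hi.symm, add_right_comm]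
    · simp only [applyPairs, hbound, hw, if_false]
      exact applyPairs_of_forall_ne s c l hl' ⟨t, Δ, rfl, ht, hΔ, hsum⟩

lemma applyPairs_of_forall_eq (s : Impression → σ) (c : Conversion) :
    ∀ (l : List (Impression × ℝ)) {st st'}, (∀ p ∈ l, s p.1 = u) → (∀ p ∈ l, 0 ≤ p.2) →
      ScopeExtension u r st st' → ScopeExtension u r st (applyPairs s c l st')
  | [], _, _, _, _, h => h
  | (i, w) :: l, (b, φ), _, hl, hw0, h => by
    obtain ⟨t, Δ, rfl, ht, hΔ, hsum⟩ := h
    have hi : s i = u := hl (i, w) List.mem_cons_self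
    have hl' : ∀ p ∈ l, s p.1 = u := fun p hp => hl p (List.mem_cons_of_mem _ hp)
    have hw0' : ∀ p ∈ l, 0 ≤ p.2 := fun p hp => hw0 p (List.mem_cons_of_mem _ hp)
    have hbound : Function.update b u t (s i) = t := by rw [hi, Function.update_self]
    by_cases hw : w ≤ t
    · simp only [applyPairs, hbound, hw, if_true]
      refine applyPairs_of_forall_eq s c l hl' hw0' ⟨t - w, Δ + Finsupp.single (i, c) w,
        ?_, by linarith, add_nonneg hΔ (Finsupp.single_nonneg.2 (hw0 (i, w) List.mem_cons_self)),
        ?_⟩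
      · rw [hi, Function.update_idem, add_assoc]
      · rw [Finsupp.sum_add_index' (fun _ => rfl) (fun _ _ _ => rfl),
          Finsupp.sum_single_index rfl]
        linarith
    · simp only [applyPairs, hbound, hw, if_false]
      exact applyPairs_of_forall_eq s c l hl' hw0' ⟨t, Δ, rfl, ht, hΔ, hsum⟩

end ScopeExtension

lemma ValidRule.nonneg_of_mem_zip {a : AttrRule} (ha : ValidRule a) {is : List Impression}
    {c : Conversion} {p : Impression × ℝ} (hp : p ∈ is.zip (a is c)) : 0 ≤ p.2 := by
  rcases eq_or_ne is [] with rfl | hne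
  · simp at hp
  · exact (ha is c hne).2.2 _ (List.of_mem_zip hp).2

lemma user_eq_of_mem_eligible {D : Dataset} {c : Conversion} {i : Impression}
    (hi : i ∈ eligible D c) : i.user = c.user :=
  (of_decide_eq_true (List.mem_filter.1 hi).2).2.1

lemma eligible_eq_of_removesScope {sc : Conversion → Option ℕ} {u : ℕ} {D D' : Dataset}
    (h : RemovesScope (fun i => i.user) sc u D D') {c : Conversion} (hc : c.user ≠ u) :
    eligible D c = eligible D' c := by
  rw [eligible, eligible, h.1, List.filter_filter]
  refine List.filter_congr fun i _ => ?_
  by_cases hi : i.time < c.time ∧ i.user = c.user ∧ i.adv = c.adv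
  · simp [hi, hc]
  · simp [hi]

theorem post_attr_user_valid_general (a : AttrRule) (ha : ValidRule a) (r : ℕ)
    (u : ℕ) (D D' : Dataset)
    (hadj : RemovesScope (fun i => i.user) (fun c => some c.user) u D D') :
    l1dist (postAttr a (fun i => i.user) (r : ℝ) D)
      (postAttr a (fun i => i.user) (r : ℝ) D') ≤ (r : ℝ) := by
  refine ScopeExtension.l1dist_le (u := u) ?_
  rw [hadj.2]
  refine List.foldl_filter_rel _ (fun _ _ c hc h => ?_) (fun _ _ c hc h => ?_) _ _ _
    (ScopeExtension.init r.cast_nonneg)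
  · have hc : c.user ≠ u := by simpa using hc
    rw [eligible_eq_of_removesScope hadj hc]
    refine ScopeExtension.applyPairs_of_forall_ne _ c _ (fun p hp => ?_) h
    rw [user_eq_of_mem_eligible (List.of_mem_zip hp).1]
    exact hc
  · have hc : c.user = u := by simpa using hc
    refine ScopeExtension.applyPairs_of_forall_eq _ c _ (fun p hp => ?_)
      (fun p hp => ha.nonneg_of_mem_zip hp) h
    rw [user_eq_of_mem_eligible (List.of_mem_zip hp).1, hc]

/-- Theorem A.3: for any attribution rule, the user adjacency relation with
post-attribution contribution bound enforcement (bound `r`, per-user scope) yields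
attributed datasets at ℓ₁-distance at most `r`. -/
theorem post_attr_user_valid (a : AttrRule) (ha : ValidRule a) (r : ℕ) (hr : 0 < r)
    (u : ℕ) (D D' : Dataset) (hD' : SortedDS D')
    (hadj : RemovesScope (fun i => i.user) (fun c => some c.user) u D D') :
    l1dist (postAttr a (fun i => i.user) (r : ℝ) D)
      (postAttr a (fun i => i.user) (r : ℝ) D') ≤ (r : ℝ) :=
  post_attr_user_valid_general a ha r u D D' hadj
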